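/- Let n ≥ 2, c > 0, and let L_u be the n×n Laplacian of the uniformly weighted line graph. For every integer k with 1 ≤ k ≤ n, the vector u_k ∈ ℝⁿ with entries u_k(j) = cos((2j−1)(2k−1)π/(4n)) for j = 1, …, n satisfies (L_u + 2c·e_ne_nᵀ) u_k = 2c(1 − cos((2k−1)π/(2n))) u_k. Hence the DCT-4 basis vectors are eigenvectors of the generalized graph Laplacian of the line graph with a self-loop of weight 2c at the last vertex. -/

import Mathlib

/-!
The DCT-4 vector is the restriction to `0, …, n - 1` of `g x = cos ((2x + 1) θ)` with
`θ = (2k - 1)π / (4n)`. Every row of `L_u + 2c e_n e_nᵀ`, applied to such a restriction, is the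
second difference `c (2 g i - g (i - 1) - g (i + 1))` as soon as the ghost values satisfy
`g (-1) = g 0` (the free end at the first vertex) and `g n = -g (n - 1)` (the self-loop at the
last one). The cosine meets both conditions, the first since `cos` is even and the second since
`cos (2nθ) = cos ((2k - 1)π / 2) = 0`, and by the addition formula its second difference is
`2 (1 - cos 2θ) g`.
-/

open Matrix Real

/-- The combinatorial Laplacian of the uniformly weighted line graph on `n` vertices with
edge weight `c`. -/
def lineLaplacian (n : ℕ) (c : ℝ) : Matrix (Fin n) (Fin n) ℝ :=
  Matrix.of fun i j =>
    if i = j then (if i.val = 0 ∨ i.val = n - 1 then c else 2 * c)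
    else if i.val + 1 = j.val ∨ j.val + 1 = i.val then -c else 0

theorem Fintype.sum_eq_add_add {α M : Type*} [Fintype α] [DecidableEq α] [AddCommMonoid M]
    {f : α → M} (a b c : α) (hab : a ≠ b) (hac : a ≠ c) (hbc : b ≠ c)
    (h : ∀ x, x ≠ a ∧ x ≠ b ∧ x ≠ c → f x = 0) : ∑ x, f x = f a + f b + f c := by
  rw [← Finset.sum_subset (Finset.subset_univ {a, b, c}) fun x _ hx => h x (by simpa using hx),
    Finset.sum_insert (by simp [hab, hac]), Finset.sum_pair hbc, add_assoc]

section lineLaplacian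

variable {n : ℕ} (c : ℝ) (g : ℝ → ℝ)

theorem lineLaplacian_mulVec_apply_of_pos_of_lt {i : Fin n} (hi₀ : 0 < i.val)
    (hi : i.val + 1 < n) :
    (lineLaplacian n c *ᵥ fun j => g j) i = c * (2 * g i - g (i - 1) - g (i + 1)) := by
  rw [mulVec, dotProduct, Fintype.sum_eq_add_add ⟨i - 1, by omega⟩ i ⟨i + 1, hi⟩
    (by simp [Fin.ext_iff]; omega) (by simp [Fin.ext_iff]) (by simp [Fin.ext_iff])]
  · simp only [lineLaplacian, of_apply, Fin.ext_iff, Nat.cast_sub (by omega : 1 ≤ i.val),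
      Nat.cast_add, Nat.cast_one, true_or, ↓reduceIte]
    split_ifs <;> first | omega | ring_nf
  · intro j hj
    simp only [lineLaplacian, of_apply, ne_eq, Fin.ext_iff] at hj ⊢
    split_ifs <;> first | ring1 | omega

theorem lineLaplacian_mulVec_apply_of_eq_zero (hn : 2 ≤ n) {i : Fin n} (hi : i.val = 0) :
    (lineLaplacian n c *ᵥ fun j => g j) i = c * (g i - g (i + 1)) := by
  rw [mulVec, dotProduct, Fintype.sum_eq_add i ⟨1, hn⟩ (by simp [Fin.ext_iff, hi])]
  · simp [lineLaplacian, Fin.ext_iff, hi, mul_sub, ← sub_eq_add_neg]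
  · intro j hj
    simp only [lineLaplacian, of_apply, ne_eq, Fin.ext_iff] at hj ⊢
    split_ifs <;> first | ring1 | omega

theorem lineLaplacian_mulVec_apply_of_eq_sub_one (hn : 2 ≤ n) {i : Fin n} (hi : i.val = n - 1) :
    (lineLaplacian n c *ᵥ fun j => g j) i = c * (g i - g (i - 1)) := by
  rw [mulVec, dotProduct, Fintype.sum_eq_add i ⟨n - 2, by omega⟩ (by simp [Fin.ext_iff]; omega)]
  · simp only [lineLaplacian, of_apply, Fin.ext_iff, hi, Nat.cast_sub (by omega : 2 ≤ n),
      Nat.cast_sub (by omega : 1 ≤ n), or_true, ↓reduceIte]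
    split_ifs <;> first | omega | ring_nf
  · intro j hj
    simp only [lineLaplacian, of_apply, ne_eq, Fin.ext_iff] at hj ⊢
    split_ifs <;> first | ring1 | omega

theorem lineLaplacian_add_single_mulVec (hn : 2 ≤ n) (hleft : g (-1) = g 0)
    (hright : g n = -g (n - 1)) :
    (lineLaplacian n c + Matrix.single (⟨n - 1, Nat.sub_one_lt_of_lt hn⟩ : Fin n)
        ⟨n - 1, Nat.sub_one_lt_of_lt hn⟩ (2 * c)) *ᵥ (fun j : Fin n => g j) =
      fun i : Fin n => c * (2 * g i - g (i - 1) - g (i + 1)) := by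
  ext i
  rw [add_mulVec, Pi.add_apply, single_mulVec, Function.update_apply]
  by_cases hlast : i.val = n - 1
  · obtain rfl : i = ⟨n - 1, Nat.sub_one_lt_of_lt hn⟩ := Fin.ext hlast
    have hcast : ((n - 1 : ℕ) : ℝ) = n - 1 := by rw [Nat.cast_sub (by omega), Nat.cast_one]
    rw [lineLaplacian_mulVec_apply_of_eq_sub_one c g hn rfl, if_pos rfl]
    simp only [hcast, sub_add_cancel, hright]
    ring
  rw [if_neg (fun h => hlast (congrArg Fin.val h)), Pi.zero_apply, add_zero]
  by_cases hfirst : i.val = 0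
  · rw [lineLaplacian_mulVec_apply_of_eq_zero c g hn hfirst, hfirst]
    simp only [Nat.cast_zero, zero_sub, hleft]
    ring
  · exact lineLaplacian_mulVec_apply_of_pos_of_lt c g (by omega) (by omega)

end lineLaplacian

theorem cos_odd_mul_second_difference (θ x : ℝ) :
    2 * cos ((2 * x + 1) * θ) - cos ((2 * (x - 1) + 1) * θ) - cos ((2 * (x + 1) + 1) * θ) =
      2 * (1 - cos (2 * θ)) * cos ((2 * x + 1) * θ) := by
  rw [show (2 * (x - 1) + 1) * θ = (2 * x + 1) * θ - 2 * θ by ring,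
    show (2 * (x + 1) + 1) * θ = (2 * x + 1) * θ + 2 * θ by ring, cos_sub, cos_add]
  ring

theorem cos_odd_mul_eq_neg_of_cos_two_mul_eq_zero {θ x : ℝ} (h : cos (2 * x * θ) = 0) :
    cos ((2 * x + 1) * θ) = -cos ((2 * (x - 1) + 1) * θ) := by
  rw [show (2 * x + 1) * θ = 2 * x * θ + θ by ring,
    show (2 * (x - 1) + 1) * θ = 2 * x * θ - θ by ring, cos_add, cos_sub, h]
  ring

/-- DCT-4 basis vectors are eigenvectors of the line graph Laplacian with a self-loop of weight `2c` at the last vertex. For `1 ≤ k ≤ n` the given vector is an eigenvector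
with the stated eigenvalue. -/
theorem dct4_eigenvectors (n : ℕ) (hn : 2 ≤ n) (c : ℝ)
    (k : ℕ) :
    (lineLaplacian n c + Matrix.single (⟨n - 1, by omega⟩ : Fin n) ⟨n - 1, by omega⟩ (2 * c)) *ᵥ
        (fun j : Fin n => Real.cos ((2 * (j : ℝ) + 1) * (2 * (k : ℝ) - 1) * Real.pi / (4 * n))) =
      (2 * c * (1 - Real.cos ((2 * (k : ℝ) - 1) * Real.pi / (2 * n)))) •
        (fun j : Fin n => Real.cos ((2 * (j : ℝ) + 1) * (2 * (k : ℝ) - 1) * Real.pi / (4 * n))) := by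
  set θ := (2 * (k : ℝ) - 1) * π / (4 * n) with hθ_def
  have hθ : ∀ x : ℝ, (2 * x + 1) * (2 * (k : ℝ) - 1) * π / (4 * n) = (2 * x + 1) * θ := by
    intro x; rw [hθ_def]; ring
  have heig : (2 * (k : ℝ) - 1) * π / (2 * n) = 2 * θ := by rw [hθ_def]; field_simp; ring
  have hright : cos (2 * n * θ) = 0 := by
    rw [cos_eq_zero_iff, hθ_def]
    exact ⟨k - 1, by field_simp; push_cast; ring⟩
  have hleft : cos ((2 * (-1 : ℝ) + 1) * θ) = cos ((2 * 0 + 1) * θ) := by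
    rw [← cos_neg]; ring_nf
  simp only [hθ, heig]
  rw [lineLaplacian_add_single_mulVec c (fun x => cos ((2 * x + 1) * θ)) hn hleft
    (cos_odd_mul_eq_neg_of_cos_two_mul_eq_zero hright)]
  ext i
  rw [Pi.smul_apply, smul_eq_mul, cos_odd_mul_second_difference]
  ring
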